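/- arXiv:2512.15455 — 5 statements merged into one kernel-verified Lean document; each statement's English description precedes it below -/
import Mathlib

section
/- If Ω is an ε-embedding of range(W) and W = QR with (ΩQ)ᵀ(ΩQ) = I (a randomized QR factorization), then the condition number of Q satisfies Cond(Q) ≤ √((1+ε)/(1-ε)). -/
open Matrix

noncomputable def eunorm {k : ℕ} (x : Fin k → ℝ) : ℝ := Real.sqrt (x ⬝ᵥ x)

/-- The `j`-th largest singular value of a matrix. -/
noncomputable def sval {n m : ℕ} (A : Matrix (Fin n) (Fin m) ℝ) (j : Fin m) : ℝ :=
  Real.sqrt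
    (((Matrix.isHermitian_conjTranspose_mul_self A).eigenvalues ∘
      Tuple.sort (Matrix.isHermitian_conjTranspose_mul_self A).eigenvalues) (Fin.rev j))

/-- Condition number σ_max / σ_min of a tall matrix. -/
noncomputable def condNum {n m : ℕ} (hm : 0 < m) (A : Matrix (Fin n) (Fin m) ℝ) : ℝ :=
  sval A ⟨0, hm⟩ / sval A ⟨m - 1, by omega⟩

/-! Every eigenvalue of `QᵀQ` is a Rayleigh quotient `‖Qx‖² / ‖x‖²`. Since `ΩQ` has orthonormal
columns, `‖x‖ = ‖ΩQx‖`, and as `Qx ∈ range(W)` the embedding property squeezes this quotient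
into `[1/(1+ε), 1/(1-ε)]`. The singular values of `Q` are the square roots of these
eigenvalues, so their ratio is at most `√((1+ε)/(1-ε))`. -/

lemma eunorm_sq {k : ℕ} (x : Fin k → ℝ) : eunorm x ^ 2 = x ⬝ᵥ x :=
  Real.sq_sqrt (Finset.sum_nonneg fun i _ => mul_self_nonneg (x i))

lemma dotProduct_mulVec_self {ι κ : Type*} [Fintype ι] [Fintype κ] (M : Matrix ι κ ℝ)
    (x : κ → ℝ) : M *ᵥ x ⬝ᵥ M *ᵥ x = x ⬝ᵥ (Mᵀ * M) *ᵥ x := by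
  rw [← mulVec_mulVec, dotProduct_mulVec x Mᵀ, vecMul_transpose]

lemma mulVec_mem_range_of_eq_mul {α ι κ : Type*} [CommRing α] [Fintype κ] [DecidableEq κ]
    {W Q : Matrix ι κ α} {R : Matrix κ κ α} (hQR : W = Q * R) (hR : IsUnit R.det) (x : κ → α) :
    Q *ᵥ x ∈ LinearMap.range W.mulVecLin :=
  ⟨R⁻¹ *ᵥ x, by rw [mulVecLin_apply, mulVec_mulVec, hQR, Matrix.mul_assoc,
    mul_nonsing_inv R hR, Matrix.mul_one]⟩

lemma Matrix.IsHermitian.eigenvalues_mem_Icc {ι : Type*} [Fintype ι] [DecidableEq ι]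
    {M : Matrix ι ι ℝ} (hM : M.IsHermitian) {a b : ℝ}
    (hbound : ∀ x, a * (x ⬝ᵥ x) ≤ x ⬝ᵥ M *ᵥ x ∧ x ⬝ᵥ M *ᵥ x ≤ b * (x ⬝ᵥ x)) (i : ι) :
    hM.eigenvalues i ∈ Set.Icc a b := by
  set v : ι → ℝ := ⇑(hM.eigenvectorBasis i)
  have hv : v ⬝ᵥ v = 1 := by
    have := orthonormal_iff_ite.1 hM.eigenvectorBasis.orthonormal i i
    rw [EuclideanSpace.inner_eq_star_dotProduct, if_pos rfl] at this
    simpa using this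
  have hquad : v ⬝ᵥ M *ᵥ v = hM.eigenvalues i := by
    simpa using (hM.eigenvalues_eq i).symm
  simpa [hv, hquad] using hbound v

lemma sval_mem_Icc {n m : ℕ} {A : Matrix (Fin n) (Fin m) ℝ} {a b : ℝ}
    (h : ∀ i, (isHermitian_conjTranspose_mul_self A).eigenvalues i ∈ Set.Icc a b) (j : Fin m) :
    sval A j ∈ Set.Icc (Real.sqrt a) (Real.sqrt b) :=
  ⟨Real.sqrt_le_sqrt (h _).1, Real.sqrt_le_sqrt (h _).2⟩

lemma condNum_le_sqrt_div {n m : ℕ} (hm : 0 < m) {A : Matrix (Fin n) (Fin m) ℝ} {a b : ℝ}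
    (ha : 0 < a)
    (h : ∀ i, (isHermitian_conjTranspose_mul_self A).eigenvalues i ∈ Set.Icc a b) :
    condNum hm A ≤ Real.sqrt (b / a) := by
  rw [Real.sqrt_div' _ ha.le]
  exact div_le_div₀ (Real.sqrt_nonneg _) (sval_mem_Icc h _).2 (Real.sqrt_pos.2 ha)
    (sval_mem_Icc h _).1

theorem stmt2_general {n m l : ℕ} (hm : 0 < m)
    (W Q : Matrix (Fin n) (Fin m) ℝ) (R : Matrix (Fin m) (Fin m) ℝ) (ε : ℝ)
    (hε0 : 0 < ε) (hε1 : ε < 1)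
    (Ω : Matrix (Fin l) (Fin n) ℝ)
    (hemb : ∀ w ∈ LinearMap.range W.mulVecLin,
      (1 - ε) * eunorm w ^ 2 ≤ eunorm (Ω.mulVec w) ^ 2 ∧
      eunorm (Ω.mulVec w) ^ 2 ≤ (1 + ε) * eunorm w ^ 2)
    (hQR : W = Q * R) (hRinv : IsUnit R.det)
    (horth : (Ω * Q)ᵀ * (Ω * Q) = 1) :
    condNum hm Q ≤ Real.sqrt ((1 + ε) / (1 - ε)) := by
  have hsub : 0 < 1 - ε := by linarith
  have hadd : 0 < 1 + ε := by linarith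
  have hbound : ∀ x, (1 + ε)⁻¹ * (x ⬝ᵥ x) ≤ x ⬝ᵥ (Qᵀ * Q) *ᵥ x ∧
      x ⬝ᵥ (Qᵀ * Q) *ᵥ x ≤ (1 - ε)⁻¹ * (x ⬝ᵥ x) := by
    intro x
    have hsketch : eunorm (Ω *ᵥ Q *ᵥ x) ^ 2 = x ⬝ᵥ x := by
      rw [eunorm_sq, mulVec_mulVec, dotProduct_mulVec_self, horth, one_mulVec]
    obtain ⟨hlow, hupp⟩ := hemb _ (mulVec_mem_range_of_eq_mul hQR hRinv x)
    rw [hsketch, eunorm_sq, dotProduct_mulVec_self] at hlow hupp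
    rw [inv_mul_le_iff₀ hadd, le_inv_mul_iff₀ hsub]
    exact ⟨hupp, hlow⟩
  have := condNum_le_sqrt_div hm (inv_pos.2 hadd)
    ((isHermitian_conjTranspose_mul_self Q).eigenvalues_mem_Icc hbound)
  rwa [inv_div_inv] at this

/-- If Ω is an ε-embedding of range(W) and W = QR is a randomized QR factorization
with (ΩQ)ᵀ(ΩQ) = I, then Cond(Q) ≤ √((1+ε)/(1-ε)). -/
theorem stmt2 {n m l : ℕ} (hm : 0 < m)
    (W Q : Matrix (Fin n) (Fin m) ℝ) (R : Matrix (Fin m) (Fin m) ℝ) (ε : ℝ)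
    (hε0 : 0 < ε) (hε1 : ε < 1)
    (hfull : ∀ c : Fin m → ℝ, W.mulVec c = 0 → c = 0)
    (Ω : Matrix (Fin l) (Fin n) ℝ)
    (hemb : ∀ w ∈ LinearMap.range W.mulVecLin,
      (1 - ε) * eunorm w ^ 2 ≤ eunorm (Ω.mulVec w) ^ 2 ∧
      eunorm (Ω.mulVec w) ^ 2 ≤ (1 + ε) * eunorm w ^ 2)
    (hQR : W = Q * R) (hRtri : R.BlockTriangular id) (hRinv : IsUnit R.det)
    (horth : (Ω * Q)ᵀ * (Ω * Q) = 1) :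
    condNum hm Q ≤ Real.sqrt ((1 + ε) / (1 - ε)) :=
  stmt2_general hm W Q R ε hε0 hε1 Ω hemb hQR hRinv horth
end

section
/- If Ω is an ε-embedding of W + span(b), then the sketch-orthogonal projection is quasi-optimal: ‖b - P_W^Ω b‖ ≤ √((1+ε)/(1-ε)) · min_{w ∈ W} ‖b - w‖. -/
/-!
The sketched projection `P = Q (ΩQ)ᵀ Ω` is chosen so that `Ω P b` is the orthogonal projection
of `Ω b` onto the range of the orthonormal matrix `ΩQ`; hence the sketched residual `Ω (b - P b)`
is no longer than `Ω (b - w)` for any `w ∈ W`. Both residuals lie in `W + span {b}`, where `Ω`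
distorts squared norms by a factor in `[1 - ε, 1 + ε]`, so
`(1 - ε) ‖b - P b‖² ≤ ‖Ω (b - P b)‖² ≤ ‖Ω (b - w)‖² ≤ (1 + ε) ‖b - w‖²`.
-/

open Matrix

lemma eunorm_nonneg {k : ℕ} (x : Fin k → ℝ) : 0 ≤ eunorm x :=
  Real.sqrt_nonneg _

lemma eunorm_add_sq_of_dotProduct_eq_zero {k : ℕ} {s t : Fin k → ℝ} (h : s ⬝ᵥ t = 0) :
    eunorm (s + t) ^ 2 = eunorm s ^ 2 + eunorm t ^ 2 := by
  simp only [eunorm_sq, add_dotProduct, dotProduct_add, dotProduct_comm t s, h]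
  ring

section OrthonormalColumns

variable {k m : ℕ} {A : Matrix (Fin k) (Fin m) ℝ}

lemma transpose_mulVec_sub_mul_transpose_mulVec (hA : Aᵀ * A = 1) (x : Fin k → ℝ) :
    Aᵀ *ᵥ (x - (A * Aᵀ) *ᵥ x) = 0 := by
  rw [mulVec_sub, mulVec_mulVec, ← Matrix.mul_assoc, hA, Matrix.one_mul, sub_self]

lemma eunorm_sub_mul_transpose_mulVec_le (hA : Aᵀ * A = 1) (x : Fin k → ℝ) (u : Fin m → ℝ) :
    eunorm (x - (A * Aᵀ) *ᵥ x) ≤ eunorm (x - A *ᵥ u) := by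
  have hsplit : x - A *ᵥ u = (x - (A * Aᵀ) *ᵥ x) + A *ᵥ (Aᵀ *ᵥ x - u) := by
    rw [mulVec_sub, mulVec_mulVec]
    abel
  have horth : (x - (A * Aᵀ) *ᵥ x) ⬝ᵥ A *ᵥ (Aᵀ *ᵥ x - u) = 0 := by
    rw [dotProduct_mulVec, ← mulVec_transpose, transpose_mulVec_sub_mul_transpose_mulVec hA,
      zero_dotProduct]
  rw [← pow_le_pow_iff_left₀ (eunorm_nonneg _) (eunorm_nonneg _) two_ne_zero, hsplit,
    eunorm_add_sq_of_dotProduct_eq_zero horth]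
  exact le_add_of_nonneg_right (sq_nonneg _)

end OrthonormalColumns

lemma eunorm_mulVec_sub_sketchedProjection_le {n m l : ℕ} {Ω : Matrix (Fin l) (Fin n) ℝ}
    {Q : Matrix (Fin n) (Fin m) ℝ} (horth : (Ω * Q)ᵀ * (Ω * Q) = 1) (b : Fin n → ℝ)
    (u : Fin m → ℝ) :
    eunorm (Ω *ᵥ (b - (Q * (Ω * Q)ᵀ * Ω) *ᵥ b)) ≤ eunorm (Ω *ᵥ (b - Q *ᵥ u)) := by
  simpa only [mulVec_sub, mulVec_mulVec, Matrix.mul_assoc] using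
    eunorm_sub_mul_transpose_mulVec_le horth (Ω *ᵥ b) u

lemma le_sqrt_div_mul_of_sq_le {ε a b s t : ℝ} (hε : ε < 1) (ha : 0 ≤ a) (hb : 0 ≤ b)
    (hlow : (1 - ε) * a ^ 2 ≤ s) (hst : s ≤ t) (hup : t ≤ (1 + ε) * b ^ 2) :
    a ≤ Real.sqrt ((1 + ε) / (1 - ε)) * b := by
  have hsq : a ^ 2 ≤ (1 + ε) / (1 - ε) * b ^ 2 := by
    rw [div_mul_eq_mul_div, le_div_iff₀ (by linarith)]
    linarith
  calc a = Real.sqrt (a ^ 2) := (Real.sqrt_sq ha).symm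
    _ ≤ Real.sqrt ((1 + ε) / (1 - ε) * b ^ 2) := Real.sqrt_le_sqrt hsq
    _ = Real.sqrt ((1 + ε) / (1 - ε)) * b := by
      rw [Real.sqrt_mul' _ (sq_nonneg b), Real.sqrt_sq hb]

theorem stmt7_general {n m l : ℕ} (W : Submodule ℝ (Fin n → ℝ)) (b : Fin n → ℝ)
    (ε : ℝ) (hε1 : ε < 1)
    (Ω : Matrix (Fin l) (Fin n) ℝ) (Q : Matrix (Fin n) (Fin m) ℝ)
    (hrange : LinearMap.range Q.mulVecLin = W)
    (horth : (Ω * Q)ᵀ * (Ω * Q) = 1)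
    (hemb : ∀ w ∈ W ⊔ Submodule.span ℝ {b},
      (1 - ε) * eunorm w ^ 2 ≤ eunorm (Ω.mulVec w) ^ 2 ∧
      eunorm (Ω.mulVec w) ^ 2 ≤ (1 + ε) * eunorm w ^ 2) :
    ∀ w ∈ W,
      eunorm (b - (Q * (Ω * Q)ᵀ * Ω).mulVec b) ≤
        Real.sqrt ((1 + ε) / (1 - ε)) * eunorm (b - w) := by
  intro w hw
  subst hrange
  obtain ⟨u, rfl⟩ := hw
  have hb : b ∈ LinearMap.range Q.mulVecLin ⊔ Submodule.span ℝ {b} :=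
    Submodule.mem_sup_right (Submodule.mem_span_singleton_self b)
  have hmem (v : Fin m → ℝ) : b - Q *ᵥ v ∈ LinearMap.range Q.mulVecLin ⊔ Submodule.span ℝ {b} :=
    sub_mem hb (Submodule.mem_sup_left (LinearMap.mem_range_self _ v))
  have hPb : (Q * (Ω * Q)ᵀ * Ω) *ᵥ b = Q *ᵥ (((Ω * Q)ᵀ * Ω) *ᵥ b) := by
    rw [mulVec_mulVec, Matrix.mul_assoc]
  refine le_sqrt_div_mul_of_sq_le hε1 (eunorm_nonneg _) (eunorm_nonneg _)
    (hemb _ (hPb ▸ hmem _)).1 ?_ (hemb _ (hmem u)).2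
  exact pow_le_pow_left₀ (eunorm_nonneg _) (eunorm_mulVec_sub_sketchedProjection_le horth b u) 2

/-- If Ω is an ε-embedding of W + span(b), then the sketch-orthogonal projection is
quasi-optimal: ‖b - P_W^Ω b‖ ≤ √((1+ε)/(1-ε)) · min_{w ∈ W} ‖b - w‖. -/
theorem stmt7 {n m l : ℕ} (W : Submodule ℝ (Fin n → ℝ)) (b : Fin n → ℝ)
    (ε : ℝ) (hε0 : 0 < ε) (hε1 : ε < 1)
    (Ω : Matrix (Fin l) (Fin n) ℝ) (Q : Matrix (Fin n) (Fin m) ℝ)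
    (hrange : LinearMap.range Q.mulVecLin = W)
    (horth : (Ω * Q)ᵀ * (Ω * Q) = 1)
    (hemb : ∀ w ∈ W ⊔ Submodule.span ℝ {b},
      (1 - ε) * eunorm w ^ 2 ≤ eunorm (Ω.mulVec w) ^ 2 ∧
      eunorm (Ω.mulVec w) ^ 2 ≤ (1 + ε) * eunorm w ^ 2) :
    ∀ w ∈ W,
      eunorm (b - (Q * (Ω * Q)ᵀ * Ω).mulVec b) ≤
        Real.sqrt ((1 + ε) / (1 - ε)) * eunorm (b - w) :=
  stmt7_general W b ε hε1 Ω Q hrange horth hemb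
end

section
/- If Ω is an ε-embedding of range(W) + span(b) and x* minimizes ‖ΩWx - Ωb‖ over x ∈ ℝᵐ, then ‖Wx* - b‖ ≤ √((1+ε)/(1-ε)) · min_{x ∈ ℝᵐ} ‖Wx - b‖. -/
/-! Both residuals `W x - b` lie in `range W + span {b}`, so
`(1 - ε) ‖W x* - b‖² ≤ ‖Ω (W x* - b)‖² ≤ ‖Ω (W x - b)‖² ≤ (1 + ε) ‖W x - b‖²`,
the middle step being the optimality of `x*` for the sketched problem. -/

open Matrix

lemma mulVec_sub_mem_range_sup_span {n m : ℕ} (W : Matrix (Fin n) (Fin m) ℝ) (b : Fin n → ℝ)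
    (c : Fin m → ℝ) : W *ᵥ c - b ∈ LinearMap.range W.mulVecLin ⊔ Submodule.span ℝ {b} :=
  Submodule.sub_mem_sup (LinearMap.mem_range_self _ c) (Submodule.mem_span_singleton_self b)

lemma le_sqrt_div_mul_of_sq_distortion {ε u v U V : ℝ} (hε : ε < 1)
    (hu : 0 ≤ u) (hv : 0 ≤ v) (hU : 0 ≤ U)
    (hlower : (1 - ε) * u ^ 2 ≤ U ^ 2) (hupper : V ^ 2 ≤ (1 + ε) * v ^ 2) (hUV : U ≤ V) :
    u ≤ Real.sqrt ((1 + ε) / (1 - ε)) * v := by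
  have hsq : (1 - ε) * u ^ 2 ≤ (1 + ε) * v ^ 2 :=
    calc (1 - ε) * u ^ 2 ≤ U ^ 2 := hlower
      _ ≤ V ^ 2 := pow_le_pow_left₀ hU hUV 2
      _ ≤ (1 + ε) * v ^ 2 := hupper
  calc u = Real.sqrt (u ^ 2) := (Real.sqrt_sq hu).symm
    _ ≤ Real.sqrt ((1 + ε) / (1 - ε) * v ^ 2) := by
      refine Real.sqrt_le_sqrt ?_
      rwa [div_mul_eq_mul_div, le_div_iff₀ (sub_pos.mpr hε), mul_comm]
    _ = Real.sqrt ((1 + ε) / (1 - ε)) * v := by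
      rw [Real.sqrt_mul' _ (sq_nonneg v), Real.sqrt_sq hv]

theorem stmt8_general {n m l : ℕ} (W : Matrix (Fin n) (Fin m) ℝ) (b : Fin n → ℝ)
    (ε : ℝ) (hε1 : ε < 1)
    (Ω : Matrix (Fin l) (Fin n) ℝ)
    (hemb : ∀ w ∈ LinearMap.range W.mulVecLin ⊔ Submodule.span ℝ {b},
      (1 - ε) * eunorm w ^ 2 ≤ eunorm (Ω.mulVec w) ^ 2 ∧
      eunorm (Ω.mulVec w) ^ 2 ≤ (1 + ε) * eunorm w ^ 2)
    (xstar : Fin m → ℝ)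
    (hmin : ∀ x : Fin m → ℝ,
      eunorm ((Ω * W).mulVec xstar - Ω.mulVec b) ≤ eunorm ((Ω * W).mulVec x - Ω.mulVec b)) :
    ∀ x : Fin m → ℝ,
      eunorm (W.mulVec xstar - b) ≤ Real.sqrt ((1 + ε) / (1 - ε)) * eunorm (W.mulVec x - b) := by
  intro x
  have hsketch : ∀ c, Ω *ᵥ (W *ᵥ c - b) = (Ω * W) *ᵥ c - Ω *ᵥ b := fun c => by
    rw [mulVec_sub, mulVec_mulVec]
  have hlower := (hemb _ (mulVec_sub_mem_range_sup_span W b xstar)).1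
  have hupper := (hemb _ (mulVec_sub_mem_range_sup_span W b x)).2
  rw [hsketch] at hlower hupper
  exact le_sqrt_div_mul_of_sq_distortion hε1 (eunorm_nonneg _) (eunorm_nonneg _)
    (eunorm_nonneg _) hlower hupper (hmin x)

/-- If Ω is an ε-embedding of range(W) + span(b) and x* minimizes ‖ΩWx - Ωb‖, then
‖Wx* - b‖ ≤ √((1+ε)/(1-ε)) · min_x ‖Wx - b‖. -/
theorem stmt8 {n m l : ℕ} (W : Matrix (Fin n) (Fin m) ℝ) (b : Fin n → ℝ)
    (ε : ℝ) (hε0 : 0 < ε) (hε1 : ε < 1)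
    (hfull : ∀ c : Fin m → ℝ, W.mulVec c = 0 → c = 0)
    (Ω : Matrix (Fin l) (Fin n) ℝ)
    (hemb : ∀ w ∈ LinearMap.range W.mulVecLin ⊔ Submodule.span ℝ {b},
      (1 - ε) * eunorm w ^ 2 ≤ eunorm (Ω.mulVec w) ^ 2 ∧
      eunorm (Ω.mulVec w) ^ 2 ≤ (1 + ε) * eunorm w ^ 2)
    (xstar : Fin m → ℝ)
    (hmin : ∀ x : Fin m → ℝ,
      eunorm ((Ω * W).mulVec xstar - Ω.mulVec b) ≤ eunorm ((Ω * W).mulVec x - Ω.mulVec b)) :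
    ∀ x : Fin m → ℝ,
      eunorm (W.mulVec xstar - b) ≤ Real.sqrt ((1 + ε) / (1 - ε)) * eunorm (W.mulVec x - b) :=
  stmt8_general W b ε hε1 Ω hemb xstar hmin
end

section
/- For a randomized Householder reflector P = I - β u(Ψu)ᵀΨ with β = 2/‖Ψu‖², there exists a standard Householder reflector P' = I - β(Ψu)(Ψu)ᵀ on ℝ^{ℓ'} such that ΨP = P'Ψ, and P' is orthogonal and symmetric. -/
open Matrix

namespace Matrix

variable {K m n : Type*}

section CommRing

variable [CommRing K] [Fintype m] [DecidableEq m] [Fintype n] [DecidableEq n]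

theorem mul_one_sub_smul_vecMulVec_mul (Ψ : Matrix m n K) (c : K) (u : n → K) (w : m → K) :
    Ψ * (1 - c • (vecMulVec u w * Ψ)) = (1 - c • vecMulVec (Ψ *ᵥ u) w) * Ψ := by
  rw [Matrix.mul_sub, Matrix.sub_mul, Matrix.mul_one, Matrix.one_mul, Matrix.mul_smul,
    Matrix.smul_mul, ← Matrix.mul_assoc, mul_vecMulVec]

end CommRing

section Field

variable [Field K] [Fintype m] [DecidableEq m]

def householder (v : m → K) : Matrix m m K :=
  1 - (2 / (v ⬝ᵥ v)) • vecMulVec v v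

theorem householder_transpose (v : m → K) : (householder v)ᵀ = householder v := by
  rw [householder, transpose_sub, transpose_one, transpose_smul, transpose_vecMulVec]

/-- Also for `v ⬝ᵥ v = 0`: then `2 / (v ⬝ᵥ v) = 0` and `householder v = 1`. -/
theorem householder_mul_self (v : m → K) : householder v * householder v = 1 := by
  by_cases hv : v ⬝ᵥ v = 0
  · simp [householder, hv]
  · have hsq : vecMulVec v v * vecMulVec v v = (v ⬝ᵥ v) • vecMulVec v v := by
      rw [vecMulVec_mul_vecMulVec, vecMulVec_smul]
    simp only [householder, Matrix.mul_sub, Matrix.sub_mul, Matrix.mul_one, Matrix.one_mul,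
      Matrix.mul_smul, Matrix.smul_mul, hsq, smul_smul]
    rw [div_mul_cancel₀ 2 hv]
    module

end Field

end Matrix

theorem stmt11_general {n l' : ℕ} (Ψ : Matrix (Fin l') (Fin n) ℝ) (u : Fin n → ℝ) :
    let β : ℝ := 2 / (Ψ.mulVec u ⬝ᵥ Ψ.mulVec u)
    let P : Matrix (Fin n) (Fin n) ℝ := 1 - β • (vecMulVec u (Ψ.mulVec u) * Ψ)
    let P' : Matrix (Fin l') (Fin l') ℝ := 1 - β • vecMulVec (Ψ.mulVec u) (Ψ.mulVec u)
    Ψ * P = P' * Ψ ∧ P'ᵀ = P' ∧ P' * P'ᵀ = 1 := by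
  intro β P P'
  change Ψ * P = householder (Ψ *ᵥ u) * Ψ ∧ (householder (Ψ *ᵥ u))ᵀ = householder (Ψ *ᵥ u) ∧
    householder (Ψ *ᵥ u) * (householder (Ψ *ᵥ u))ᵀ = 1
  rw [householder_transpose, householder_mul_self]
  exact ⟨mul_one_sub_smul_vecMulVec_mul Ψ β u (Ψ *ᵥ u), rfl, rfl⟩

/-- For the randomized Householder reflector P = I - β u(Ψu)ᵀΨ with β = 2/‖Ψu‖², the
standard Householder reflector P' = I - β(Ψu)(Ψu)ᵀ satisfies ΨP = P'Ψ, and P' is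
symmetric and orthogonal. -/
theorem stmt11 {n l' : ℕ} (Ψ : Matrix (Fin l') (Fin n) ℝ) (u : Fin n → ℝ)
    (hu : Ψ.mulVec u ≠ 0) :
    let β : ℝ := 2 / (Ψ.mulVec u ⬝ᵥ Ψ.mulVec u)
    let P : Matrix (Fin n) (Fin n) ℝ := 1 - β • (vecMulVec u (Ψ.mulVec u) * Ψ)
    let P' : Matrix (Fin l') (Fin l') ℝ := 1 - β • vecMulVec (Ψ.mulVec u) (Ψ.mulVec u)
    Ψ * P = P' * Ψ ∧ P'ᵀ = P' ∧ P' * P'ᵀ = 1 :=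
  stmt11_general Ψ u
end

section
/- With the randomized Arnoldi relation AV_m = V_{m+1}Ḡ_m and b = βV_{m+1}e₁, if Ω is an ε-embedding of K_{m+1} = range(V_{m+1}), then the sketched-GMRES solution x^G = V_m y^G with y^G minimizing ‖Ḡ_m y - βe₁‖ achieves a quasi-optimal residual: ‖b - A x^G‖ ≤ √((1+ε)/(1-ε)) · min_{x ∈ range(V_m)} ‖b - Ax‖. -/
open Matrix

/-- The canonical basis vector e₁ of ℝ^{m+1}. -/
def e1 (m : ℕ) : Fin (m + 1) → ℝ := Pi.single 0 1

lemma eunorm_sub_comm {k : ℕ} (x y : Fin k → ℝ) : eunorm (x - y) = eunorm (y - x) := by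
  rw [eunorm, eunorm, ← neg_sub, dotProduct_neg, neg_dotProduct, neg_neg]

lemma eunorm_mulVec_of_transpose_mul_self {k l : ℕ} (M : Matrix (Fin l) (Fin k) ℝ)
    (hM : Mᵀ * M = 1) (z : Fin k → ℝ) : eunorm (M *ᵥ z) = eunorm z := by
  rw [eunorm, eunorm, dotProduct_mulVec, ← mulVec_transpose, mulVec_mulVec, hM, one_mulVec]

lemma sub_mulVec_mulVec_of_mul_eq {n p q : ℕ} {A : Matrix (Fin n) (Fin n) ℝ}
    {W : Matrix (Fin n) (Fin p) ℝ} {V : Matrix (Fin n) (Fin q) ℝ} {G : Matrix (Fin q) (Fin p) ℝ}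
    (h : A * W = V * G) (c : Fin q → ℝ) (y : Fin p → ℝ) :
    V *ᵥ c - A *ᵥ (W *ᵥ y) = V *ᵥ (c - G *ᵥ y) := by
  rw [mulVec_sub, mulVec_mulVec, h, ← mulVec_mulVec]

lemma eunorm_le_sqrt_mul_of_sketch_le {n l : ℕ} (Ω : Matrix (Fin l) (Fin n) ℝ) {ε : ℝ}
    (hε : ε < 1) {u w : Fin n → ℝ} (hu : (1 - ε) * eunorm u ^ 2 ≤ eunorm (Ω *ᵥ u) ^ 2)
    (hw : eunorm (Ω *ᵥ w) ^ 2 ≤ (1 + ε) * eunorm w ^ 2)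
    (hsketch : eunorm (Ω *ᵥ u) ≤ eunorm (Ω *ᵥ w)) :
    eunorm u ≤ Real.sqrt ((1 + ε) / (1 - ε)) * eunorm w := by
  have hsq : eunorm u ^ 2 ≤ (1 + ε) / (1 - ε) * eunorm w ^ 2 := by
    rw [div_mul_eq_mul_div, le_div_iff₀ (by linarith), mul_comm]
    have := pow_le_pow_left₀ (eunorm_nonneg _) hsketch 2
    linarith
  calc eunorm u = Real.sqrt (eunorm u ^ 2) := (Real.sqrt_sq (eunorm_nonneg _)).symm
    _ ≤ Real.sqrt ((1 + ε) / (1 - ε) * eunorm w ^ 2) := Real.sqrt_le_sqrt hsq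
    _ = Real.sqrt ((1 + ε) / (1 - ε)) * eunorm w := by
      rw [Real.sqrt_mul' _ (sq_nonneg _), Real.sqrt_sq (eunorm_nonneg _)]

theorem stmt14_general {n m l : ℕ} (A : Matrix (Fin n) (Fin n) ℝ)
    (V : Matrix (Fin n) (Fin (m + 1)) ℝ) (G : Matrix (Fin (m + 1)) (Fin m) ℝ)
    (Ω : Matrix (Fin l) (Fin n) ℝ) (β : ℝ) (yG : Fin m → ℝ)
    (ε : ℝ) (hε1 : ε < 1)
    (horth : (Ω * V)ᵀ * (Ω * V) = 1)
    (harnoldi : A * V.submatrix id Fin.castSucc = V * G)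
    (hemb : ∀ w ∈ LinearMap.range V.mulVecLin,
      (1 - ε) * eunorm w ^ 2 ≤ eunorm (Ω.mulVec w) ^ 2 ∧
      eunorm (Ω.mulVec w) ^ 2 ≤ (1 + ε) * eunorm w ^ 2)
    (hmin : ∀ y : Fin m → ℝ,
      eunorm (G.mulVec yG - β • e1 m) ≤ eunorm (G.mulVec y - β • e1 m)) :
    ∀ y : Fin m → ℝ,
      eunorm (β • V.mulVec (e1 m) - A.mulVec ((V.submatrix id Fin.castSucc).mulVec yG)) ≤
        Real.sqrt ((1 + ε) / (1 - ε)) *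
          eunorm (β • V.mulVec (e1 m) - A.mulVec ((V.submatrix id Fin.castSucc).mulVec y)) := by
  intro y
  have hsketch (z : Fin (m + 1) → ℝ) : eunorm (Ω *ᵥ (V *ᵥ z)) = eunorm z := by
    rw [mulVec_mulVec, eunorm_mulVec_of_transpose_mul_self _ horth]
  rw [← mulVec_smul, sub_mulVec_mulVec_of_mul_eq harnoldi, sub_mulVec_mulVec_of_mul_eq harnoldi]
  refine eunorm_le_sqrt_mul_of_sketch_le Ω hε1 (hemb _ ⟨_, rfl⟩).1 (hemb _ ⟨_, rfl⟩).2 ?_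
  rw [hsketch, hsketch, eunorm_sub_comm, eunorm_sub_comm (β • e1 m)]
  exact hmin y

/-- With AV_m = V_{m+1}Ḡ_m, b = βV_{m+1}e₁ and Ω an ε-embedding of range(V_{m+1}),
the sketched-GMRES solution x^G = V_m y^G, with y^G minimizing ‖Ḡ_m y - βe₁‖, achieves a
quasi-optimal residual: ‖b - Ax^G‖ ≤ √((1+ε)/(1-ε)) · min_{x ∈ range(V_m)} ‖b - Ax‖. -/
theorem stmt14 {n m l : ℕ} (A : Matrix (Fin n) (Fin n) ℝ)
    (V : Matrix (Fin n) (Fin (m + 1)) ℝ) (G : Matrix (Fin (m + 1)) (Fin m) ℝ)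
    (Ω : Matrix (Fin l) (Fin n) ℝ) (β : ℝ) (yG : Fin m → ℝ)
    (ε : ℝ) (hε0 : 0 < ε) (hε1 : ε < 1)
    (horth : (Ω * V)ᵀ * (Ω * V) = 1)
    (harnoldi : A * V.submatrix id Fin.castSucc = V * G)
    (hemb : ∀ w ∈ LinearMap.range V.mulVecLin,
      (1 - ε) * eunorm w ^ 2 ≤ eunorm (Ω.mulVec w) ^ 2 ∧
      eunorm (Ω.mulVec w) ^ 2 ≤ (1 + ε) * eunorm w ^ 2)
    (hmin : ∀ y : Fin m → ℝ,
      eunorm (G.mulVec yG - β • e1 m) ≤ eunorm (G.mulVec y - β • e1 m)) :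
    ∀ y : Fin m → ℝ,
      eunorm (β • V.mulVec (e1 m) - A.mulVec ((V.submatrix id Fin.castSucc).mulVec yG)) ≤
        Real.sqrt ((1 + ε) / (1 - ε)) *
          eunorm (β • V.mulVec (e1 m) - A.mulVec ((V.submatrix id Fin.castSucc).mulVec y)) :=
  stmt14_general A V G Ω β yG ε hε1 horth harnoldi hemb hmin
end
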